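/- Splitting probability bound: consider a permutation σ of the vertex set of the hypercube Q_n whose cycles partition Q_n, and draw an edge e uniformly at random from the n·2^(n−1) edges of Q_n. Let S^{≤k} be the event that both endpoints of e lie in the same cycle of σ and at cyclic distance at most k along the cycle (so that composing with the transposition of the endpoints of e splits that cycle producing a cycle of length ≤ k). Then P(S^{≤k}) ≤ 2·log₂(2k)/n. -/

import Mathlib

/-!
Let `W v = {v, σ v, …, σ^(2k-1) v}`. An edge `{x, σ^j x}` with `1 ≤ j ≤ k` lies in
`W (σ^(-i) x)` for each of the `m = min k L` values `0 ≤ i < m`, where `L` is the length of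
the cycle of `x`, and each of these windows has at most `2m` points. Hence the weights
`2 / |W v|` give every short edge a total weight at least `1`, and the number of short edges is
at most `∑ v, (2 / |W v|) · |E(W v)| ≤ ∑ v, log₂ |W v| ≤ 2^n log₂ (2k)` by the
edge-isoperimetric inequality `2 |E(A)| ≤ |A| log₂ |A|` of the hypercube. -/

/-- The hypercube graph `Q_n` on vertex set `{0,1}^n`. -/
def cube (n : ℕ) : SimpleGraph (Fin n → Bool) :=
  SimpleGraph.fromRel (fun x y => (Finset.univ.filter (fun i => x i ≠ y i)).card = 1)

open Finset Function Real

lemma le_logb_two_one_add {t : ℝ} (h0 : 0 ≤ t) (h1 : t ≤ 1) : t ≤ logb 2 (1 + t) := by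
  rw [le_logb_iff_rpow_le one_lt_two (by linarith)]
  simpa [one_add_one_eq_two] using rpow_one_add_le_one_add_mul_self (s := 1) (by norm_num) h0 h1

lemma mul_logb_add_mul_logb_add_two_mul_le {a b : ℝ} (ha : 0 < a) (hab : a ≤ b) :
    a * logb 2 a + b * logb 2 b + 2 * a ≤ (a + b) * logb 2 (a + b) := by
  have hb : 0 < b := ha.trans_le hab
  have hsmall : a * (logb 2 a + 1) ≤ a * logb 2 (a + b) := by
    rw [← logb_self_eq_one one_lt_two, ← logb_mul ha.ne' two_ne_zero]
    gcongr
    · norm_num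
    · linarith
  have hlarge : b * logb 2 b + a ≤ b * logb 2 (a + b) := by
    have hsplit : logb 2 (a + b) = logb 2 b + logb 2 (1 + a / b) := by
      rw [← logb_mul hb.ne' (by positivity)]
      congr 1
      field_simp
      ring
    have h := mul_le_mul_of_nonneg_left
      (le_logb_two_one_add (t := a / b) (by positivity) ((div_le_one hb).2 hab)) hb.le
    rw [mul_div_cancel₀ a hb.ne'] at h
    rw [hsplit, mul_add]
    linarith
  linarith

lemma mul_logb_add_mul_logb_add_two_mul_min_le {a b : ℝ} (ha : 0 ≤ a) (hb : 0 ≤ b) :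
    a * logb 2 a + b * logb 2 b + 2 * min a b ≤ (a + b) * logb 2 (a + b) := by
  wlog hab : a ≤ b generalizing a b
  · have := this hb ha (le_of_not_ge hab)
    rw [min_comm, add_comm b a] at this
    linarith
  rcases ha.eq_or_lt with rfl | ha
  · simp [hb]
  rw [min_eq_left hab]
  exact mul_logb_add_mul_logb_add_two_mul_le ha hab

lemma card_eq_sum_ite_mem {α : Type*} [Fintype α] [DecidableEq α] (s : Finset α) :
    #s = ∑ x, if x ∈ s then 1 else 0 := by
  simp

lemma sum_pi_fin_succ {n : ℕ} {β M : Type*} [Fintype β] [AddCommMonoid M]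
    (f : (Fin (n + 1) → β) → M) :
    ∑ x, f x = ∑ b : β, ∑ t : Fin n → β, f (Fin.cons b t) := by
  rw [← Fintype.sum_prod_type', ← (Fin.consEquiv fun _ => β).sum_comp]
  rfl

lemma card_le_sum_mul_card_filter {ι β : Type*} [Fintype β] (P : Finset ι) (c : β → ℝ)
    (r : β → ι → Prop) [DecidableRel r] (hP : ∀ p ∈ P, 1 ≤ ∑ v with r v p, c v) :
    (#P : ℝ) ≤ ∑ v, c v * #{p ∈ P | r v p} := by
  calc (#P : ℝ) = ∑ p ∈ P, 1 := by simp
    _ ≤ ∑ p ∈ P, ∑ v with r v p, c v := sum_le_sum hP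
    _ = ∑ v, c v * #{p ∈ P | r v p} := by
        simp only [sum_filter]
        rw [sum_comm]
        refine sum_congr rfl fun v _ => ?_
        rw [← sum_filter, sum_const, nsmul_eq_mul, mul_comm]

section Graph

variable {V : Type*}

/-- Counts every edge of `G[A]` twice. -/
def adjPairs (G : SimpleGraph V) [DecidableRel G.Adj] (A : Finset V) : Finset (V × V) :=
  {p ∈ A ×ˢ A | G.Adj p.1 p.2}

lemma card_adjPairs_eq_sum [Fintype V] [DecidableEq V] (G : SimpleGraph V) [DecidableRel G.Adj]
    (A : Finset V) :
    #(adjPairs G A) = ∑ x, ∑ y, if G.Adj x y ∧ x ∈ A ∧ y ∈ A then 1 else 0 := by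
  rw [adjPairs, card_eq_sum_ite_mem, ← Fintype.sum_prod_type']
  simp [and_comm]

/-- Edges `{x, y}` of `G` such that `σ * swap x y` splits off a cycle of length at most `k`. -/
def shortChordGraph (G : SimpleGraph V) (σ : Equiv.Perm V) (k : ℕ) : SimpleGraph V where
  Adj x y := G.Adj x y ∧ ∃ j : ℕ, 1 ≤ j ∧ j ≤ k ∧ ((σ ^ j) x = y ∨ (σ ^ j) y = x)
  symm := ⟨fun _ _ ⟨h, j, hj1, hjk, hj⟩ => ⟨h.symm, j, hj1, hjk, hj.symm⟩⟩
  loopless := ⟨fun _ h => G.irrefl h.1⟩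

lemma edgeSet_shortChordGraph (G : SimpleGraph V) (σ : Equiv.Perm V) (k : ℕ) :
    (shortChordGraph G σ k).edgeSet = {e ∈ G.edgeSet | ∃ x y, e = s(x, y) ∧
        ∃ j : ℕ, 1 ≤ j ∧ j ≤ k ∧ ((σ ^ j) x = y ∨ (σ ^ j) y = x)} := by
  ext e
  induction e with
  | h a b =>
    simp only [SimpleGraph.mem_edgeSet, Set.mem_ofPred_eq, Sym2.eq_iff]
    change G.Adj a b ∧ _ ↔ _
    constructor
    · rintro ⟨h, hj⟩
      exact ⟨h, a, b, Or.inl ⟨rfl, rfl⟩, hj⟩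
    · rintro ⟨h, x, y, (⟨rfl, rfl⟩ | ⟨rfl, rfl⟩), j, hj1, hjk, hj⟩
      · exact ⟨h, j, hj1, hjk, hj⟩
      · exact ⟨h, j, hj1, hjk, hj.symm⟩

end Graph

section Cube

variable {n : ℕ}

lemma cube_adj_iff {x y : Fin n → Bool} : (cube n).Adj x y ↔ hammingDist x y = 1 := by
  change x ≠ y ∧ (hammingDist x y = 1 ∨ hammingDist y x = 1) ↔ _
  rw [hammingDist_comm y x, or_self]
  exact ⟨And.right, fun h => ⟨hammingDist_pos.1 (by omega), h⟩⟩

instance : DecidableRel (cube n).Adj := fun _ _ => decidable_of_iff _ cube_adj_iff.symm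

lemma hammingDist_cons {β : Type*} [DecidableEq β] (b c : β) (t s : Fin n → β) :
    hammingDist (Fin.cons b t : Fin (n + 1) → β) (Fin.cons c s) =
      (if b = c then 0 else 1) + hammingDist t s := by
  simp only [hammingDist, card_filter, Fin.sum_univ_succ, Fin.cons_zero, Fin.cons_succ]
  split_ifs <;> simp_all

lemma cube_adj_cons {b c : Bool} {t s : Fin n → Bool} :
    (cube (n + 1)).Adj (Fin.cons b t) (Fin.cons c s) ↔
      b = c ∧ (cube n).Adj t s ∨ t = s ∧ b ≠ c := by
  rw [cube_adj_iff, cube_adj_iff, hammingDist_cons, ← hammingDist_eq_zero]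
  split_ifs <;> simp_all

def cubeSlice (A : Finset (Fin (n + 1) → Bool)) (b : Bool) : Finset (Fin n → Bool) :=
  {t | Fin.cons b t ∈ A}

@[simp]
lemma mem_cubeSlice {A : Finset (Fin (n + 1) → Bool)} {b : Bool} {t : Fin n → Bool} :
    t ∈ cubeSlice A b ↔ Fin.cons b t ∈ A := by
  simp [cubeSlice]

lemma card_cubeSlice_add_card_cubeSlice (A : Finset (Fin (n + 1) → Bool)) :
    #(cubeSlice A false) + #(cubeSlice A true) = #A := by
  simp only [card_eq_sum_ite_mem, sum_pi_fin_succ, mem_cubeSlice, Fintype.sum_bool, add_comm]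

lemma card_adjPairs_cube_succ (A : Finset (Fin (n + 1) → Bool)) :
    #(adjPairs (cube (n + 1)) A) = #(adjPairs (cube n) (cubeSlice A false)) +
      #(adjPairs (cube n) (cubeSlice A true)) + 2 * #(cubeSlice A false ∩ cubeSlice A true) := by
  simp only [card_adjPairs_eq_sum, sum_pi_fin_succ, cube_adj_cons, Fintype.sum_bool,
    mem_cubeSlice, card_eq_sum_ite_mem (_ ∩ _), mem_inter]
  simp only [true_and, ne_eq, not_true, false_and, or_false, and_false, Bool.true_eq_false,
    Bool.false_eq_true, not_false_eq_true, false_or, ite_and, sum_ite_eq, mem_univ, if_true,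
    sum_add_distrib]
  simp only [← ite_and, and_comm]
  ring

theorem card_adjPairs_cube_le : ∀ {n : ℕ} (A : Finset (Fin n → Bool)),
    (#(adjPairs (cube n) A) : ℝ) ≤ #A * logb 2 #A
  | 0, A => by
    have hempty : adjPairs (cube 0) A = ∅ :=
      filter_false_of_mem fun p _ h => h.ne (Subsingleton.elim _ _)
    rw [hempty, card_empty, Nat.cast_zero]
    exact mul_nonneg (Nat.cast_nonneg _)
      (div_nonneg (log_natCast_nonneg _) (log_nonneg one_le_two))
  | n + 1, A => by
    set a := cubeSlice A false
    set b := cubeSlice A true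
    have hinter : (#(a ∩ b) : ℝ) ≤ min (#a : ℝ) #b := by
      exact_mod_cast le_min (card_le_card inter_subset_left) (card_le_card inter_subset_right)
    have hsucc : (#(adjPairs (cube (n + 1)) A) : ℝ) =
        #(adjPairs (cube n) a) + #(adjPairs (cube n) b) + 2 * #(a ∩ b) := by
      exact_mod_cast card_adjPairs_cube_succ A
    have hcard : (#A : ℝ) = #a + #b := by
      exact_mod_cast (card_cubeSlice_add_card_cubeSlice A).symm
    rw [hsucc, hcard]
    linarith [card_adjPairs_cube_le a, card_adjPairs_cube_le b,
      mul_logb_add_mul_logb_add_two_mul_min_le (Nat.cast_nonneg (α := ℝ) #a)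
        (Nat.cast_nonneg (α := ℝ) #b)]

end Cube

section Window

variable {α : Type*} [DecidableEq α]

def window (σ : Equiv.Perm α) (ℓ : ℕ) (v : α) : Finset α :=
  (range ℓ).image fun i => (σ ^ i) v

lemma mem_window {σ : Equiv.Perm α} {ℓ : ℕ} {v w : α} :
    w ∈ window σ ℓ v ↔ ∃ i < ℓ, (σ ^ i) v = w := by
  simp [window]

lemma card_window_le (σ : Equiv.Perm α) (ℓ : ℕ) (v : α) : #(window σ ℓ v) ≤ ℓ :=
  card_image_le.trans (card_range ℓ).le

lemma card_window_le_of_pow_apply_eq_self {σ : Equiv.Perm α} {L : ℕ} {v : α} (hL : 0 < L)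
    (hv : (σ ^ L) v = v) (ℓ : ℕ) : #(window σ ℓ v) ≤ L := by
  have hper : IsPeriodicPt σ L v := by rwa [IsPeriodicPt, IsFixedPt, ← Equiv.Perm.coe_pow]
  refine (card_le_card fun w hw => ?_).trans (card_window_le σ L v)
  obtain ⟨i, -, rfl⟩ := mem_window.1 hw
  refine mem_window.2 ⟨i % L, Nat.mod_lt i hL, ?_⟩
  simpa only [Equiv.Perm.coe_pow] using hper.iterate_mod_apply i

lemma card_window_pow_inv_apply_le [Finite α] (σ : Equiv.Perm α) (ℓ i : ℕ) (x : α) :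
    #(window σ ℓ ((σ⁻¹ ^ i) x)) ≤ minimalPeriod (⇑σ⁻¹) x := by
  have hper := ((isPeriodicPt_minimalPeriod (⇑σ⁻¹) x).apply_iterate i).eq
  rw [← Equiv.Perm.coe_pow, ← Equiv.Perm.coe_pow, inv_pow, Equiv.Perm.inv_eq_iff_eq] at hper
  exact card_window_le_of_pow_apply_eq_self
    (minimalPeriod_pos_of_mem_periodicPts (σ⁻¹.injective.mem_periodicPts x)) hper.symm ℓ

lemma one_le_sum_two_div_card_window [Fintype α] {σ : Equiv.Perm α} {k j : ℕ} {x y : α}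
    (hk : 0 < k) (hjk : j ≤ k) (hxy : (σ ^ j) x = y) :
    1 ≤ ∑ v with x ∈ window σ (2 * k) v ∧ y ∈ window σ (2 * k) v,
      (2 : ℝ) / #(window σ (2 * k) v) := by
  set L := minimalPeriod (⇑σ⁻¹) x
  have hL : 0 < L := minimalPeriod_pos_of_mem_periodicPts (σ⁻¹.injective.mem_periodicPts x)
  set m := min k L
  set v : ℕ → α := fun i => (σ⁻¹ ^ i) x
  have hv : ∀ i, (σ ^ i) (v i) = x := fun i => by simp [v, inv_pow]
  have hv_inj : ∀ i ∈ range m, ∀ i' ∈ range m, v i = v i' → i = i' := by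
    intro i hi i' hi' h
    refine iterate_injOn_Iio_minimalPeriod (f := ⇑σ⁻¹) (x := x)
      ((mem_range.1 hi).trans_le (min_le_right _ _))
      ((mem_range.1 hi').trans_le (min_le_right _ _)) ?_
    simpa only [v, Equiv.Perm.coe_pow] using h
  have hv_mem : ∀ i < m, x ∈ window σ (2 * k) (v i) ∧ y ∈ window σ (2 * k) (v i) :=
    fun i hi => ⟨mem_window.2 ⟨i, by omega, hv i⟩,
      mem_window.2 ⟨j + i, by omega, by rw [pow_add, Equiv.Perm.mul_apply, hv i, hxy]⟩⟩
  have hv_card : ∀ i < m, #(window σ (2 * k) (v i)) ≤ 2 * m := fun i _ => by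
    have := card_window_le σ (2 * k) (v i)
    have : #(window σ (2 * k) (v i)) ≤ L := card_window_pow_inv_apply_le σ (2 * k) i x
    omega
  have hm : (0 : ℝ) < m := by simp only [m]; exact_mod_cast lt_min hk hL
  calc (1 : ℝ) = ∑ i ∈ range m, (2 : ℝ) / (2 * m) := by
        rw [sum_const, card_range, nsmul_eq_mul]; field_simp
    _ ≤ ∑ i ∈ range m, (2 : ℝ) / #(window σ (2 * k) (v i)) := by
        refine sum_le_sum fun i hi => div_le_div_of_nonneg_left zero_le_two ?_ ?_
        · exact_mod_cast card_pos.2 ⟨x, (hv_mem i (mem_range.1 hi)).1⟩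
        · exact_mod_cast hv_card i (mem_range.1 hi)
    _ = ∑ w ∈ (range m).image v, (2 : ℝ) / #(window σ (2 * k) w) :=
        (sum_image (f := fun w => (2 : ℝ) / #(window σ (2 * k) w)) hv_inj).symm
    _ ≤ _ := by
        refine sum_le_sum_of_subset_of_nonneg ?_ fun _ _ _ => by positivity
        intro w hw
        obtain ⟨i, hi, rfl⟩ := mem_image.1 hw
        simpa using hv_mem i (mem_range.1 hi)

end Window

lemma ncard_edgeSet_shortChordGraph_le {V : Type*} [Fintype V] [DecidableEq V]
    (G : SimpleGraph V) [DecidableRel G.Adj]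
    (hiso : ∀ A : Finset V, (#(adjPairs G A) : ℝ) ≤ #A * logb 2 #A)
    (σ : Equiv.Perm V) {k : ℕ} (hk : 0 < k) :
    ((shortChordGraph G σ k).edgeSet.ncard : ℝ) ≤ Fintype.card V * logb 2 (2 * k) := by
  classical
  set H := shortChordGraph G σ k
  set W := window σ (2 * k)
  set P : Finset (V × V) := {p | H.Adj p.1 p.2}
  have hP : 2 * H.edgeSet.ncard = #P := by
    rw [← H.coe_edgeFinset, Set.ncard_coe_finset, H.two_mul_card_edgeFinset]
  have hcover : ∀ p ∈ P, 1 ≤ ∑ v with p.1 ∈ W v ∧ p.2 ∈ W v, (2 : ℝ) / #(W v) := by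
    rintro ⟨x, y⟩ hp
    obtain ⟨-, j, -, hjk, hxy | hyx⟩ := (mem_filter.1 hp).2
    · exact one_le_sum_two_div_card_window hk hjk hxy
    · simpa only [and_comm] using one_le_sum_two_div_card_window hk hjk hyx
  have hwindow : ∀ v, (2 : ℝ) / #(W v) * #{p ∈ P | p.1 ∈ W v ∧ p.2 ∈ W v} ≤
      2 * logb 2 (2 * k) := fun v => by
    have hsub : {p ∈ P | p.1 ∈ W v ∧ p.2 ∈ W v} ⊆ adjPairs G (W v) := fun p hp => by
      simp only [P, adjPairs, mem_filter, mem_product] at hp ⊢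
      exact ⟨hp.2, hp.1.2.1⟩
    have hpos : (0 : ℝ) < #(W v) := by
      exact_mod_cast card_pos.2 ⟨v, mem_window.2 ⟨0, by omega, rfl⟩⟩
    calc (2 : ℝ) / #(W v) * #{p ∈ P | p.1 ∈ W v ∧ p.2 ∈ W v}
        ≤ 2 / #(W v) * (#(W v) * logb 2 #(W v)) := by
          gcongr
          exact (Nat.cast_le.2 (card_le_card hsub)).trans (hiso (W v))
      _ = 2 * logb 2 #(W v) := by field_simp
      _ ≤ 2 * logb 2 (2 * k) := by
          gcongr 2 * ?_
          exact logb_le_logb_of_le one_lt_two hpos (by exact_mod_cast card_window_le σ (2 * k) v)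
  have hsum := (card_le_sum_mul_card_filter P _ _ hcover).trans (sum_le_sum fun v _ => hwindow v)
  rw [sum_const, card_univ, nsmul_eq_mul] at hsum
  have hP_real : (2 : ℝ) * H.edgeSet.ncard = #P := by exact_mod_cast hP
  linarith

/-- Splitting probability bound: for a permutation `σ` of the vertices of `Q_n`, the
proportion of the `n·2^(n-1)` edges of `Q_n` whose two endpoints lie in the same cycle of
`σ` at cyclic distance at most `k` (so that the corresponding transposition splits off a
cycle of length `≤ k`) is at most `2·log₂(2k)/n`. -/
theorem split_prob_bound (n k : ℕ) (hk : 1 ≤ k) (σ : Equiv.Perm (Fin n → Bool)) :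
    (Set.ncard {e ∈ (cube n).edgeSet | ∃ x y, e = s(x, y) ∧
        ∃ j : ℕ, 1 ≤ j ∧ j ≤ k ∧ ((σ ^ j) x = y ∨ (σ ^ j) y = x)} : ℝ) /
        (n * 2 ^ (n - 1)) ≤
      2 * Real.logb 2 (2 * k) / n := by
  rcases n.eq_zero_or_pos with rfl | hn
  · simp
  have hcount := ncard_edgeSet_shortChordGraph_le (cube n) card_adjPairs_cube_le σ hk
  rw [edgeSet_shortChordGraph, Fintype.card_fun, Fintype.card_bool, Fintype.card_fin,
    Nat.cast_pow, Nat.cast_two, ← pow_sub_one_mul hn.ne'] at hcount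
  rw [div_le_div_iff₀ (by positivity) (by positivity)]
  calc _ ≤ 2 ^ (n - 1) * 2 * logb 2 (2 * k) * n :=
        mul_le_mul_of_nonneg_right hcount n.cast_nonneg
    _ = _ := by ring
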